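/- arXiv:1703.07482 — 6 statements merged into one kernel-verified Lean document; each statement's English description precedes it below -/
import Mathlib

section
/- Let N ≥ 1 and let Δ be a real number that is not an integer. Let F_N be the N×N unitary DFT matrix and D_N(Δ) the diagonal matrix with entries e^{2πiΔn/N}. Then for all 0 ≤ k, k' ≤ N−1, the (k, k') entry of F_N · D_N(Δ) · F_N^H equals (1/N) · (1 − e^{2πiΔ}) / (1 − e^{2πi(k' − k + Δ)/N}); in particular every entry of F_N · D_N(Δ) · F_N^H is nonzero. -/
open Matrix Complex

noncomputable section

/-- The `N × N` unitary DFT matrix, with entries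
`[F_N]_{k,n} = N^{-1/2} e^{-2πikn/N}`. -/
def dftMatrix (N : ℕ) : Matrix (Fin N) (Fin N) ℂ :=
  Matrix.of fun k n : Fin N =>
    (Real.sqrt N : ℂ)⁻¹ *
      Complex.exp (-(2 * (Real.pi : ℂ) * Complex.I * (k : ℕ) * (n : ℕ)) / (N : ℕ))

/-- The diagonal matrix `D_N(ε)` with diagonal entries `e^{2πiεn/N}`, `n = 0, …, N-1`. -/
def cfoDiag (N : ℕ) (ε : ℝ) : Matrix (Fin N) (Fin N) ℂ :=
  Matrix.diagonal fun n : Fin N =>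
    Complex.exp (2 * (Real.pi : ℂ) * Complex.I * (ε : ℂ) * ((n : ℕ) : ℂ) / (N : ℂ))

/-!
The `(k, k')` entry is `N⁻¹ ∑_{n<N} rⁿ` with `r = e^{2πi(k' - k + Δ)/N}`, a geometric sum. Since
`k' - k` is an integer, `r^N = e^{2πiΔ}`, and for non-integer `Δ` neither `r` nor `r^N` is `1`:
the closed form `N⁻¹ (1 - r^N) / (1 - r)` is then well defined and has nonzero numerator.
-/

open Finset
open scoped Real

lemma Complex.exp_two_pi_I_mul_eq_one_iff {x : ℂ} : exp (2 * π * I * x) = 1 ↔ ∃ n : ℤ, x = n := by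
  rw [exp_eq_one_iff]
  refine exists_congr fun n => ?_
  rw [mul_comm (n : ℂ), mul_right_inj' two_pi_I_ne_zero]

lemma Complex.exp_two_pi_I_mul_ne_one {x : ℝ} (hx : ∀ z : ℤ, x ≠ z) :
    exp (2 * π * I * x) ≠ 1 := fun h => by
  obtain ⟨n, hn⟩ := exp_two_pi_I_mul_eq_one_iff.1 h
  exact hx n (mod_cast hn)

lemma Complex.exp_two_pi_I_mul_int_add_div_ne_one {x : ℝ} (hx : ∀ z : ℤ, x ≠ z) (m : ℤ)
    {N : ℕ} (hN : N ≠ 0) : exp (2 * π * I * (m + x) / N) ≠ 1 := fun h => by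
  rw [mul_div_assoc] at h
  obtain ⟨n, hn⟩ := exp_two_pi_I_mul_eq_one_iff.1 h
  rw [div_eq_iff (Nat.cast_ne_zero.2 hN)] at hn
  apply hx (n * N - m)
  apply ofReal_injective
  push_cast
  linear_combination hn

lemma Complex.exp_two_pi_I_mul_int_add_div_pow (m : ℤ) (x : ℂ) {N : ℕ} (hN : N ≠ 0) :
    exp (2 * π * I * (m + x) / N) ^ N = exp (2 * π * I * x) := by
  rw [← exp_nat_mul, mul_div_cancel₀ _ (Nat.cast_ne_zero.2 hN), mul_add, exp_add,
    mul_comm _ (m : ℂ), exp_int_mul_two_pi_mul_I, one_mul]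

lemma star_dftMatrix_apply (N : ℕ) (k n : Fin N) :
    star (dftMatrix N k n) = (√N : ℂ)⁻¹ * exp (2 * π * I * (k : ℕ) * (n : ℕ) / N) := by
  simp [dftMatrix, ← exp_conj, map_div₀, map_ofNat]

lemma dftMatrix_mul_cfoDiag_mul_conjTranspose_apply (N : ℕ) (ε : ℝ) (k k' : Fin N) :
    (dftMatrix N * cfoDiag N ε * (dftMatrix N)ᴴ) k k' =
      (N : ℂ)⁻¹ * ∑ n ∈ range N, exp (2 * π * I * ((k' : ℕ) - (k : ℕ) + ε) / N) ^ n := by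
  rw [mul_sum, ← Fin.sum_univ_eq_sum_range (fun n => (N : ℂ)⁻¹ * _ ^ n), mul_apply]
  refine sum_congr rfl fun n _ => ?_
  have hsqrt : (√N : ℂ)⁻¹ * (√N : ℂ)⁻¹ = (N : ℂ)⁻¹ := by
    rw [← mul_inv, ← ofReal_mul, Real.mul_self_sqrt (Nat.cast_nonneg N), ofReal_natCast]
  rw [cfoDiag, mul_diagonal, conjTranspose_apply, star_dftMatrix_apply, dftMatrix, of_apply,
    ← exp_nat_mul]
  calc _ = ((√N : ℂ)⁻¹ * (√N : ℂ)⁻¹) * (exp (-(2 * π * I * (k : ℕ) * (n : ℕ)) / N) *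
        exp (2 * π * I * ε * (n : ℕ) / N) * exp (2 * π * I * (k' : ℕ) * (n : ℕ) / N)) := by ring
    _ = _ := by
      rw [hsqrt, ← exp_add, ← exp_add]
      congr 2
      ring

theorem stmt5_general (N : ℕ) (Δ : ℝ) (hΔ : ∀ z : ℤ, Δ ≠ (z : ℝ)) (k k' : Fin N) :
    (dftMatrix N * cfoDiag N Δ * (dftMatrix N)ᴴ) k k' =
      (N : ℂ)⁻¹ * (1 - Complex.exp (2 * (Real.pi : ℂ) * Complex.I * (Δ : ℂ))) /
        (1 - Complex.exp (2 * (Real.pi : ℂ) * Complex.I *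
          (((k' : ℕ) : ℂ) - ((k : ℕ) : ℂ) + (Δ : ℂ)) / (N : ℂ))) ∧
    (dftMatrix N * cfoDiag N Δ * (dftMatrix N)ᴴ) k k' ≠ 0 := by
  have hN : N ≠ 0 := k.pos.ne'
  have hshift : ((k' : ℕ) : ℂ) - (k : ℕ) + Δ = (((k' : ℤ) - k : ℤ) : ℂ) + Δ := by
    push_cast; ring
  have hr := exp_two_pi_I_mul_int_add_div_ne_one hΔ ((k' : ℤ) - k) hN
  have hentry : (dftMatrix N * cfoDiag N Δ * (dftMatrix N)ᴴ) k k' =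
      (N : ℂ)⁻¹ * (1 - exp (2 * π * I * Δ)) /
        (1 - exp (2 * π * I * (((k' : ℕ) : ℂ) - (k : ℕ) + Δ) / N)) := by
    rw [dftMatrix_mul_cfoDiag_mul_conjTranspose_apply, range_eq_Ico, hshift,
      geom_sum_Ico' hr (Nat.zero_le N), exp_two_pi_I_mul_int_add_div_pow _ _ hN, pow_zero,
      ← mul_div_assoc]
  refine ⟨hentry, hentry ▸ div_ne_zero (mul_ne_zero (by simpa using hN) ?_) ?_⟩
  · exact sub_ne_zero.2 (exp_two_pi_I_mul_ne_one hΔ).symm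
  · rw [hshift]
    exact sub_ne_zero.2 hr.symm

/-- For a non-integer `Δ`, the `(k,k')` entry of `F_N · D_N(Δ) · F_Nᴴ` equals
`(1/N)(1 - e^{2πiΔ})/(1 - e^{2πi(k' - k + Δ)/N})`; in particular every entry is nonzero. -/
theorem stmt5 (N : ℕ) (hN : 1 ≤ N) (Δ : ℝ) (hΔ : ∀ z : ℤ, Δ ≠ (z : ℝ)) (k k' : Fin N) :
    (dftMatrix N * cfoDiag N Δ * (dftMatrix N)ᴴ) k k' =
      (N : ℂ)⁻¹ * (1 - Complex.exp (2 * (Real.pi : ℂ) * Complex.I * (Δ : ℂ))) /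
        (1 - Complex.exp (2 * (Real.pi : ℂ) * Complex.I *
          (((k' : ℕ) : ℂ) - ((k : ℕ) : ℂ) + (Δ : ℂ)) / (N : ℂ))) ∧
    (dftMatrix N * cfoDiag N Δ * (dftMatrix N)ᴴ) k k' ≠ 0 :=
  stmt5_general N Δ hΔ k k'

end
end

section
/- Let Q ≥ 1 and let A and B be Q×Q complex matrices that are both column conjugate symmetric, i.e. [A]_{q,q'} = conj([A]_{Q−1−q,q'}) and [B]_{q,q'} = conj([B]_{Q−1−q,q'}) for all 0 ≤ q, q' ≤ Q−1. Then every entry of the matrix A^H · B is a real number. This holds no matter whether Q is even or odd. -/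
/-! Conjugating a column conjugate symmetric matrix reverses its rows. Hence conjugating an entry
`∑ₖ conj (A k q) * B k q'` of `Aᴴ * B` only reindexes its sum by `k ↦ Q - 1 - k`, so the entry is
real. -/

open Matrix

namespace Matrix

variable {m n α : Type*} [Fintype m] [CommSemiring α] [StarRing α]

theorem map_starRingEnd_conjTranspose_mul_eq_self (e : m ≃ m) {A B : Matrix m n α}
    (hA : A.map (starRingEnd α) = A.submatrix e id)
    (hB : B.map (starRingEnd α) = B.submatrix e id) :
    (Aᴴ * B).map (starRingEnd α) = Aᴴ * B := by
  calc (Aᴴ * B).map (starRingEnd α)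
      = (A.map (starRingEnd α))ᴴ * B.map (starRingEnd α) := by
        rw [Matrix.map_mul, conjTranspose_map (starRingEnd α) fun _ => rfl]
    _ = (A.submatrix e id)ᴴ * B.submatrix e id := by rw [hA, hB]
    _ = Aᴴ * B := by
        rw [conjTranspose_submatrix, submatrix_mul_equiv, submatrix_id_id]

end Matrix

theorem stmt11_general (Q : ℕ) (A B : Matrix (Fin Q) (Fin Q) ℂ)
    (hA : ∀ q q' : Fin Q, A q q' = starRingEnd ℂ (A q.rev q'))
    (hB : ∀ q q' : Fin Q, B q q' = starRingEnd ℂ (B q.rev q')) :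
    ∀ q q' : Fin Q, ((Aᴴ * B) q q').im = 0 := by
  have map_conj_eq {M : Matrix (Fin Q) (Fin Q) ℂ}
      (hM : ∀ q q' : Fin Q, M q q' = starRingEnd ℂ (M q.rev q')) :
      M.map (starRingEnd ℂ) = M.submatrix Fin.revPerm id := by
    ext q q'
    simp [hM q q']
  intro q q'
  rw [← Complex.conj_eq_iff_im]
  exact congrFun₂ (map_starRingEnd_conjTranspose_mul_eq_self Fin.revPerm
    (map_conj_eq hA) (map_conj_eq hB)) q q'

/-- If `A` and `B` are both column conjugate symmetric (`[A]_{q,q'} = conj [A]_{Q-1-q,q'}`),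
then every entry of `Aᴴ B` is real. -/
theorem stmt11 (Q : ℕ) (hQ : 1 ≤ Q) (A B : Matrix (Fin Q) (Fin Q) ℂ)
    (hA : ∀ q q' : Fin Q, A q q' = starRingEnd ℂ (A q.rev q'))
    (hB : ∀ q q' : Fin Q, B q q' = starRingEnd ℂ (B q.rev q')) :
    ∀ q q' : Fin Q, ((Aᴴ * B) q q').im = 0 :=
  stmt11_general Q A B hA hB
end

section
/- Let Q ≥ 1 be an integer and let θ, ψ be real numbers with e^{iQψ} = 1, e^{iψ} ≠ 1, e^{iθ} ≠ 1 and e^{iθ} ≠ e^{iψ}. Define S(θ, ψ) = Σ_{q=0}^{Q−1} Σ_{q'=0}^{Q−1−q} ( e^{iq'ψ} e^{iqθ} + e^{i(q+q')ψ} e^{−iqθ} ) − Σ_{q=0}^{Q−1} e^{iqψ}. Then S(θ, ψ) = (1 − e^{iQθ})² / ( (1 − e^{iθ}) (e^{iψ} − e^{iθ}) e^{i(Q−1)θ} ). -/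
/-!
With `a = e^{iθ}` and `b = e^{iψ}`, the hypothesis `b^Q = 1` turns the inner sum over `q'` into
the geometric sum `(b^{-q} - 1)/(b - 1)`, so row `q` contributes
`((a/b)^q + a^{-q} - a^q - (b/a)^q)/(b - 1)`, and `Σ b^q = 0`. The four remaining geometric
series have ratios whose `Q`-th powers are `a^Q, a^{-Q}, a^Q, a^{-Q}`, which leaves a rational
identity in `a`, `b` and `a^Q`.
-/

noncomputable section

/-- The double sum `S(θ,ψ)` of the paper:
`S = Σ_{q=0}^{Q−1} Σ_{q'=0}^{Q−1−q} (e^{iq'ψ}e^{iqθ} + e^{i(q+q')ψ}e^{−iqθ}) − Σ_{q=0}^{Q−1} e^{iqψ}`. -/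
def Ssum (Q : ℕ) (θ ψ : ℝ) : ℂ :=
  (∑ q ∈ Finset.range Q, ∑ q' ∈ Finset.range (Q - q),
      (Complex.exp (((q' : ℝ) * ψ : ℝ) * Complex.I) *
          Complex.exp (((q : ℝ) * θ : ℝ) * Complex.I) +
        Complex.exp ((((q : ℝ) + (q' : ℝ)) * ψ : ℝ) * Complex.I) *
          Complex.exp ((-((q : ℝ) * θ) : ℝ) * Complex.I))) -
    ∑ q ∈ Finset.range Q, Complex.exp (((q : ℝ) * ψ : ℝ) * Complex.I)

open Finset Complex

section Algebra

variable {K : Type*} [Field K] {a b : K} {Q : ℕ}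

theorem geom_sum_range_sub_of_pow_eq_one (hbQ : b ^ Q = 1) (hb : b ≠ 1) {q : ℕ} (hq : q ≤ Q) :
    ∑ i ∈ range (Q - q), b ^ i = ((b ^ q)⁻¹ - 1) / (b - 1) := by
  have hinv : b ^ (Q - q) * b ^ q = 1 := by rw [← pow_add, Nat.sub_add_cancel hq, hbQ]
  rw [geom_sum_eq hb, eq_inv_of_mul_eq_one_left hinv]

theorem row_sum_eq_of_pow_eq_one (hb0 : b ≠ 0) (hbQ : b ^ Q = 1) (hb : b ≠ 1) {q : ℕ}
    (hq : q ≤ Q) :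
    ∑ q' ∈ range (Q - q), (b ^ q' * a ^ q + b ^ (q + q') * a⁻¹ ^ q) =
      ((a / b) ^ q + a⁻¹ ^ q - a ^ q - (b / a) ^ q) / (b - 1) := by
  have hfactor : ∀ q' : ℕ, b ^ q' * a ^ q + b ^ (q + q') * a⁻¹ ^ q =
      b ^ q' * (a ^ q + b ^ q * a⁻¹ ^ q) := fun q' => by ring
  rw [sum_congr rfl fun q' _ => hfactor q', ← sum_mul,
    geom_sum_range_sub_of_pow_eq_one hbQ hb hq, div_pow, div_pow]
  field_simp
  ring

theorem four_geom_sums_eq (ha0 : a ≠ 0) (hb0 : b ≠ 0) (hb : b ≠ 1) (ha : a ≠ 1) (hab : a ≠ b)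
    {A : K} (hA0 : A ≠ 0) :
    ((A - 1) / (a / b - 1) + (A⁻¹ - 1) / (a⁻¹ - 1) - (A - 1) / (a - 1) -
        (A⁻¹ - 1) / (b / a - 1)) / (b - 1) =
      (1 - A) ^ 2 / ((1 - a) * (b - a) * (A / a)) := by
  have : b - 1 ≠ 0 := sub_ne_zero.mpr hb
  have : a - 1 ≠ 0 := sub_ne_zero.mpr ha
  have : a - b ≠ 0 := sub_ne_zero.mpr hab
  field_simp
  ring

theorem double_geom_sum_eq_of_pow_eq_one (ha0 : a ≠ 0) (hbQ : b ^ Q = 1) (hb : b ≠ 1)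
    (ha : a ≠ 1) (hab : a ≠ b) :
    (∑ q ∈ range Q, ∑ q' ∈ range (Q - q), (b ^ q' * a ^ q + b ^ (q + q') * a⁻¹ ^ q)) -
        ∑ q ∈ range Q, b ^ q =
      (1 - a ^ Q) ^ 2 / ((1 - a) * (b - a) * (a ^ Q / a)) := by
  obtain rfl | hQ := Q.eq_zero_or_pos
  · simp
  have hb0 : b ≠ 0 := ne_zero_pow hQ.ne' (hbQ ▸ one_ne_zero)
  calc _ = (∑ q ∈ range Q, ((a / b) ^ q + a⁻¹ ^ q - a ^ q - (b / a) ^ q)) / (b - 1) := by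
        rw [geom_sum_eq hb, hbQ, sub_self, zero_div, sub_zero, sum_div]
        exact sum_congr rfl fun q hq =>
          row_sum_eq_of_pow_eq_one hb0 hbQ hb (mem_range.mp hq).le
    _ = _ := by
        rw [sum_sub_distrib, sum_sub_distrib, sum_add_distrib, geom_sum_eq (div_ne_one_of_ne hab),
          geom_sum_eq (inv_ne_one.mpr ha), geom_sum_eq ha, geom_sum_eq (div_ne_one_of_ne hab.symm),
          div_pow, div_pow, inv_pow, hbQ, div_one, one_div]
        exact four_geom_sums_eq ha0 hb0 hb ha hab (pow_ne_zero Q ha0)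

end Algebra

theorem cexp_natCast_mul_mul_I (n : ℕ) (x : ℝ) :
    cexp (((n : ℝ) * x : ℝ) * I) = cexp (x * I) ^ n := by
  rw [← Complex.exp_nat_mul]
  push_cast
  ring_nf

theorem cexp_natCast_add_mul_mul_I (m n : ℕ) (x : ℝ) :
    cexp ((((m : ℝ) + n) * x : ℝ) * I) = cexp (x * I) ^ (m + n) := by
  rw [← cexp_natCast_mul_mul_I, Nat.cast_add]

theorem cexp_neg_natCast_mul_mul_I (n : ℕ) (x : ℝ) :
    cexp ((-((n : ℝ) * x) : ℝ) * I) = (cexp (x * I))⁻¹ ^ n := by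
  rw [inv_pow, ← cexp_natCast_mul_mul_I, ← Complex.exp_neg]
  push_cast
  ring_nf

theorem cexp_natCast_sub_one_mul_mul_I (n : ℕ) (x : ℝ) :
    cexp ((((n : ℝ) - 1) * x : ℝ) * I) = cexp (x * I) ^ n / cexp (x * I) := by
  rw [← cexp_natCast_mul_mul_I, ← Complex.exp_sub]
  push_cast
  ring_nf

theorem stmt15_general (Q : ℕ) (θ ψ : ℝ)
    (hQψ : Complex.exp (((Q : ℝ) * ψ : ℝ) * Complex.I) = 1)
    (hψ : Complex.exp ((ψ : ℂ) * Complex.I) ≠ 1)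
    (hθ : Complex.exp ((θ : ℂ) * Complex.I) ≠ 1)
    (hθψ : Complex.exp ((θ : ℂ) * Complex.I) ≠ Complex.exp ((ψ : ℂ) * Complex.I)) :
    Ssum Q θ ψ =
      (1 - Complex.exp (((Q : ℝ) * θ : ℝ) * Complex.I)) ^ 2 /
        ((1 - Complex.exp ((θ : ℂ) * Complex.I)) *
          (Complex.exp ((ψ : ℂ) * Complex.I) - Complex.exp ((θ : ℂ) * Complex.I)) *
          Complex.exp ((((Q : ℝ) - 1) * θ : ℝ) * Complex.I)) := by
  rw [cexp_natCast_mul_mul_I] at hQψ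
  simp only [Ssum, cexp_natCast_mul_mul_I, cexp_natCast_add_mul_mul_I, cexp_neg_natCast_mul_mul_I,
    cexp_natCast_sub_one_mul_mul_I]
  exact double_geom_sum_eq_of_pow_eq_one (Complex.exp_ne_zero _) hQψ hψ hθ hθψ

/-- Closed form for `S(θ,ψ)` when `e^{iQψ} = 1`, `e^{iψ} ≠ 1`, `e^{iθ} ≠ 1`,
`e^{iθ} ≠ e^{iψ}`. -/
theorem stmt15 (Q : ℕ) (hQ : 1 ≤ Q) (θ ψ : ℝ)
    (hQψ : Complex.exp (((Q : ℝ) * ψ : ℝ) * Complex.I) = 1)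
    (hψ : Complex.exp ((ψ : ℂ) * Complex.I) ≠ 1)
    (hθ : Complex.exp ((θ : ℂ) * Complex.I) ≠ 1)
    (hθψ : Complex.exp ((θ : ℂ) * Complex.I) ≠ Complex.exp ((ψ : ℂ) * Complex.I)) :
    Ssum Q θ ψ =
      (1 - Complex.exp (((Q : ℝ) * θ : ℝ) * Complex.I)) ^ 2 /
        ((1 - Complex.exp ((θ : ℂ) * Complex.I)) *
          (Complex.exp ((ψ : ℂ) * Complex.I) - Complex.exp ((θ : ℂ) * Complex.I)) *
          Complex.exp ((((Q : ℝ) - 1) * θ : ℝ) * Complex.I)) :=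
  stmt15_general Q θ ψ hQψ hψ hθ hθψ

end
end

section
/- Let Q ≥ 1 be an integer and let θ, ψ be real numbers with e^{iQψ} = 1, e^{iψ} ≠ 1, e^{iθ} ≠ 1 and e^{iθ} ≠ e^{iψ}. Define S(θ, ψ) = Σ_{q=0}^{Q−1} Σ_{q'=0}^{Q−1−q} ( e^{iq'ψ} e^{iqθ} + e^{i(q+q')ψ} e^{−iqθ} ) − Σ_{q=0}^{Q−1} e^{iqψ}. Then the modulus of S satisfies |S(θ, ψ)| = (1 − cos(Qθ)) / |cos(ψ/2) − cos(θ − ψ/2)|. -/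
noncomputable section

lemma expc' (n : ℕ) (x : ℝ) :
    Complex.exp (((n : ℝ) * x : ℝ) * Complex.I) = Complex.exp ((x : ℂ) * Complex.I) ^ n := by
  rw [← Complex.exp_nat_mul]; congr 1; push_cast; ring

lemma abs_exp_mul_I_sub_one' (x : ℝ) :
    ‖Complex.exp ((x : ℂ) * Complex.I) - 1‖ = 2 * |Real.sin (x / 2)| := by
  rw [Complex.exp_mul_I, Complex.norm_def, Complex.normSq_apply]
  simp only [Complex.sub_re, Complex.add_re, Complex.mul_re, Complex.I_re, Complex.I_im,
    Complex.sub_im, Complex.add_im, Complex.mul_im, Complex.one_re, Complex.one_im,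
    Complex.cos_ofReal_re, Complex.cos_ofReal_im, Complex.sin_ofReal_re, Complex.sin_ofReal_im]
  have hs : Real.cos x = 1 - 2 * Real.sin (x/2)^2 := by
    have h1 : Real.cos (2 * (x/2)) = 2 * Real.cos (x/2)^2 - 1 := Real.cos_two_mul _
    have h2 : Real.sin (x/2)^2 + Real.cos (x/2)^2 = 1 := Real.sin_sq_add_cos_sq _
    have h3 : (2:ℝ) * (x/2) = x := by ring
    rw [h3] at h1; linarith
  have hc : Real.sin x ^2 = 1 - Real.cos x ^2 := by
    have := Real.sin_sq_add_cos_sq x; linarith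
  have h : (Real.cos x + (Real.sin x * 0 - 0 * 1) - 1) * (Real.cos x + (Real.sin x * 0 - 0 * 1) - 1) +
        (0 + (Real.sin x * 1 + 0 * 0) - 0) * (0 + (Real.sin x * 1 + 0 * 0) - 0)
      = (2 * |Real.sin (x/2)|)^2 := by
    have h2 : |Real.sin (x/2)|^2 = Real.sin (x/2)^2 := sq_abs _
    nlinarith [hs, h2, hc]
  rw [h, Real.sqrt_sq (by positivity)]

lemma Ssum_closed_form (Q : ℕ) (θ ψ : ℝ)
    (hQψ : Complex.exp (((Q : ℝ) * ψ : ℝ) * Complex.I) = 1)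
    (hψ : Complex.exp ((ψ : ℂ) * Complex.I) ≠ 1)
    (hθ : Complex.exp ((θ : ℂ) * Complex.I) ≠ 1)
    (hθψ : Complex.exp ((θ : ℂ) * Complex.I) ≠ Complex.exp ((ψ : ℂ) * Complex.I)) :
    Ssum Q θ ψ = Complex.exp ((θ : ℂ) * Complex.I) *
      ((Complex.exp ((θ : ℂ) * Complex.I))^Q + ((Complex.exp ((θ : ℂ) * Complex.I))^Q)⁻¹ - 2) /
      ((Complex.exp ((θ : ℂ) * Complex.I) - Complex.exp ((ψ : ℂ) * Complex.I)) *
        (Complex.exp ((θ : ℂ) * Complex.I) - 1)) := by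
  set a := Complex.exp ((θ : ℂ) * Complex.I) with ha
  set b := Complex.exp ((ψ : ℂ) * Complex.I) with hb
  have ha0 : a ≠ 0 := Complex.exp_ne_zero _
  have hb0 : b ≠ 0 := Complex.exp_ne_zero _
  have hbQ : b ^ Q = 1 := by
    rw [hb, ← Complex.exp_nat_mul, ← hQψ]; congr 1; push_cast; ring
  have hab : a - b ≠ 0 := sub_ne_zero.mpr hθψ
  have ha1 : a - 1 ≠ 0 := sub_ne_zero.mpr hθ
  have hb1 : b - 1 ≠ 0 := sub_ne_zero.mpr hψ
  have hS : Ssum Q θ ψ =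
      (∑ q ∈ Finset.range Q, ((a^q + b^q * (a^q)⁻¹) * ∑ q' ∈ Finset.range (Q - q), b^q')) -
        ∑ q ∈ Finset.range Q, b^q := by
    unfold Ssum
    congr 1
    · refine Finset.sum_congr rfl (fun q _ => ?_)
      rw [Finset.mul_sum]
      refine Finset.sum_congr rfl (fun q' _ => ?_)
      have e1 : Complex.exp (((q' : ℝ) * ψ : ℝ) * Complex.I) = b^q' := expc' q' ψ
      have e2 : Complex.exp (((q : ℝ) * θ : ℝ) * Complex.I) = a^q := expc' q θ
      have e3 : Complex.exp ((-((q : ℝ) * θ) : ℝ) * Complex.I) = (a^q)⁻¹ := by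
        rw [← expc' q θ, ← Complex.exp_neg]; congr 1; push_cast; ring
      have e4 : Complex.exp ((((q : ℝ) + (q' : ℝ)) * ψ : ℝ) * Complex.I) = b^q * b^q' := by
        have : (((q : ℝ) + (q' : ℝ)) * ψ : ℝ) = (((q + q' : ℕ) : ℝ) * ψ : ℝ) := by push_cast; ring
        rw [this, expc' (q + q') ψ, pow_add]
      rw [e1, e2, e3, e4]; ring
    · exact Finset.sum_congr rfl (fun q _ => expc' q ψ)
  have hsb : ∑ q ∈ Finset.range Q, b^q = 0 := by
    rw [geom_sum_eq hψ, hbQ, sub_self, zero_div]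
  have hinner : ∀ q ∈ Finset.range Q, (a^q + b^q * (a^q)⁻¹) * ∑ q' ∈ Finset.range (Q - q), b^q'
      = ((a * b⁻¹)^q - a^q + (a⁻¹)^q - (b * a⁻¹)^q) / (b - 1) := by
    intro q hq
    have hqQ : q ≤ Q := le_of_lt (Finset.mem_range.mp hq)
    have hbq : b^(Q - q) = (b^q)⁻¹ := by
      have : b^(Q - q) * b^q = 1 := by rw [← pow_add, Nat.sub_add_cancel hqQ, hbQ]
      exact eq_inv_of_mul_eq_one_left this
    rw [geom_sum_eq hψ, hbq, mul_pow, mul_pow, inv_pow, inv_pow]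
    have hap : (a:ℂ)^q ≠ 0 := pow_ne_zero _ ha0
    have hbp : (b:ℂ)^q ≠ 0 := pow_ne_zero _ hb0
    field_simp
    ring
  rw [hS, hsb, sub_zero, Finset.sum_congr rfl hinner, ← Finset.sum_div]
  have hsplit : ∑ q ∈ Finset.range Q, ((a * b⁻¹)^q - a^q + (a⁻¹)^q - (b * a⁻¹)^q)
      = (∑ q ∈ Finset.range Q, (a * b⁻¹)^q) - (∑ q ∈ Finset.range Q, a^q)
        + (∑ q ∈ Finset.range Q, (a⁻¹)^q) - (∑ q ∈ Finset.range Q, (b * a⁻¹)^q) := by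
    simp [Finset.sum_sub_distrib, Finset.sum_add_distrib]
  have hab1 : a * b⁻¹ ≠ 1 := by
    intro h; apply hθψ; field_simp at h; exact h
  have hainv1 : (a⁻¹ : ℂ) ≠ 1 := by
    intro h; apply hθ; rw [← inv_inv a, h, inv_one]
  have hba1 : b * a⁻¹ ≠ 1 := by
    intro h; apply hθψ; field_simp at h; exact h.symm
  rw [hsplit, geom_sum_eq hab1, geom_sum_eq hθ, geom_sum_eq hainv1, geom_sum_eq hba1]
  have p1 : (a * b⁻¹)^Q = a^Q := by rw [mul_pow, inv_pow, hbQ, inv_one, mul_one]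
  have p2 : (a⁻¹ : ℂ)^Q = (a^Q)⁻¹ := inv_pow a Q
  have p3 : (b * a⁻¹)^Q = (a^Q)⁻¹ := by rw [mul_pow, inv_pow, hbQ, one_mul]
  rw [p1, p2, p3]
  have haQ : (a:ℂ)^Q ≠ 0 := pow_ne_zero _ ha0
  have h1 : a * b⁻¹ - 1 ≠ 0 := sub_ne_zero.mpr hab1
  have h2 : (a⁻¹ : ℂ) - 1 ≠ 0 := sub_ne_zero.mpr hainv1
  have h3 : b * a⁻¹ - 1 ≠ 0 := sub_ne_zero.mpr hba1
  have h1a : (1:ℂ) - a ≠ 0 := by intro h; apply ha1; rw [← neg_sub] at h; simpa using neg_eq_zero.mp h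
  have hba : b - a ≠ 0 := by intro h; apply hab; rw [← neg_sub] at h; simpa using neg_eq_zero.mp h
  obtain ⟨A, hA, hA0⟩ : ∃ A : ℂ, a^Q = A ∧ A ≠ 0 := ⟨a^Q, rfl, haQ⟩
  rw [hA]
  have q1 : (A - 1)/(a*b⁻¹ - 1) = b*(A - 1)/(a - b) := by
    rw [div_eq_div_iff h1 hab]; field_simp
  have q2 : (A⁻¹ - 1)/(a⁻¹ - 1) = a*(A⁻¹ - 1)/(1 - a) := by
    rw [div_eq_div_iff h2 h1a]; field_simp
  have q3 : (A⁻¹ - 1)/(b*a⁻¹ - 1) = a*(A⁻¹ - 1)/(b - a) := by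
    rw [div_eq_div_iff h3 hba]; field_simp
  rw [q1, q2, q3]
  have hden : (a - b) * (a - 1) ≠ 0 := mul_ne_zero hab ha1
  rw [div_eq_div_iff hb1 hden]
  have hAinv : A⁻¹ - 1 = (1 - A)/A := by field_simp
  rw [hAinv]
  field_simp
  ring

lemma exp_pow_add_inv (Q : ℕ) (θ : ℝ) :
    Complex.exp ((θ:ℂ) * Complex.I)^Q + (Complex.exp ((θ:ℂ) * Complex.I)^Q)⁻¹ - 2
      = ((2*Real.cos (Q*θ) - 2 : ℝ) : ℂ) := by
  rw [← Complex.exp_nat_mul, ← Complex.exp_neg]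
  have h1 : (Q:ℂ) * ((θ:ℂ) * Complex.I) = ((Q*θ:ℝ):ℂ) * Complex.I := by push_cast; ring
  rw [h1]
  have h2 : -(((Q*θ:ℝ):ℂ) * Complex.I) = ((-(Q*θ):ℝ):ℂ) * Complex.I := by push_cast; ring
  rw [h2, Complex.exp_mul_I, Complex.exp_mul_I]
  push_cast
  simp [Complex.cos_neg, Complex.sin_neg]
  ring

/-- The modulus of `S(θ,ψ)`:
`|S(θ,ψ)| = (1 − cos Qθ)/|cos(ψ/2) − cos(θ − ψ/2)|`. -/
theorem stmt16 (Q : ℕ) (hQ : 1 ≤ Q) (θ ψ : ℝ)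
    (hQψ : Complex.exp (((Q : ℝ) * ψ : ℝ) * Complex.I) = 1)
    (hψ : Complex.exp ((ψ : ℂ) * Complex.I) ≠ 1)
    (hθ : Complex.exp ((θ : ℂ) * Complex.I) ≠ 1)
    (hθψ : Complex.exp ((θ : ℂ) * Complex.I) ≠ Complex.exp ((ψ : ℂ) * Complex.I)) :
    ‖Ssum Q θ ψ‖ =
      (1 - Real.cos (Q * θ)) / |Real.cos (ψ / 2) - Real.cos (θ - ψ / 2)| := by
  rw [Ssum_closed_form Q θ ψ hQψ hψ hθ hθψ]
  set a := Complex.exp ((θ : ℂ) * Complex.I) with ha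
  set b := Complex.exp ((ψ : ℂ) * Complex.I) with hb
  have hb0 : b ≠ 0 := Complex.exp_ne_zero _
  -- |a| = 1
  have habs_a : ‖a‖ = 1 := by
    rw [ha, Complex.norm_exp]; simp
  have habs_b : ‖b‖ = 1 := by
    rw [hb, Complex.norm_exp]; simp
  -- numerator
  have hnum : ‖a^Q + (a^Q)⁻¹ - 2‖ = 2 * (1 - Real.cos (Q*θ)) := by
    rw [ha, exp_pow_add_inv, Complex.norm_real, Real.norm_eq_abs, abs_of_nonpos (by nlinarith [Real.cos_le_one ((Q:ℝ)*θ)])]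
    ring
  -- |a - 1|
  have habs_a1 : ‖a - 1‖ = 2 * |Real.sin (θ/2)| := abs_exp_mul_I_sub_one' θ
  -- |a - b|
  have habs_ab : ‖a - b‖ = 2 * |Real.sin ((θ - ψ)/2)| := by
    have hmul : Complex.exp ((ψ:ℂ) * Complex.I) * Complex.exp (((θ-ψ:ℝ):ℂ) * Complex.I)
        = Complex.exp ((θ:ℂ) * Complex.I) := by
      rw [← Complex.exp_add]; congr 1; push_cast; ring
    have hfac : a - b = b * (Complex.exp (((θ-ψ:ℝ):ℂ) * Complex.I) - 1) := by
      rw [mul_sub, mul_one, hb, hmul]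
    rw [hfac, norm_mul, habs_b, one_mul, abs_exp_mul_I_sub_one' (θ - ψ)]
  -- RHS denominator
  have hrhs : |Real.cos (ψ / 2) - Real.cos (θ - ψ / 2)| =
      2 * |Real.sin (θ/2)| * |Real.sin ((θ - ψ)/2)| := by
    rw [Real.cos_sub_cos]
    have e1 : (ψ/2 + (θ - ψ/2))/2 = θ/2 := by ring
    have e2 : (ψ/2 - (θ - ψ/2))/2 = -((θ - ψ)/2) := by ring
    rw [e1, e2, Real.sin_neg]
    rw [abs_mul, abs_mul]
    simp [abs_neg]
  -- nonvanishing of sines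
  have hs1 : |Real.sin (θ/2)| ≠ 0 := by
    intro h
    have : ‖a - 1‖ = 0 := by rw [habs_a1, h]; ring
    exact sub_ne_zero.mpr hθ (by rwa [norm_eq_zero] at this)
  have hs2 : |Real.sin ((θ - ψ)/2)| ≠ 0 := by
    intro h
    have : ‖a - b‖ = 0 := by rw [habs_ab, h]; ring
    exact sub_ne_zero.mpr hθψ (by rwa [norm_eq_zero] at this)
  rw [norm_div, norm_mul, norm_mul, habs_a, one_mul, hnum, habs_a1, habs_ab, hrhs]
  field_simp

end
end

section
/- Let Q ≥ 2 be an integer, let ε_f be a real number with 0 < |ε_f| < 1/2, and let m be an integer with 1 ≤ |m| ≤ Q − 1. Then sin²(π(ε_f + m)/Q) > sin²(π ε_f / Q); equivalently, the ratio sin²(π(ε_f + m)/Q) / sin²(π ε_f / Q) is strictly greater than 1. -/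
/-!
Since `sin² x - sin² y = sin (x + y) · sin (x - y)`, we get `sin² y < sin² x` as soon as
`|y| < |x|` and `x ± y` lie in `(-π, π)`: then `x + y` and `x - y` have the same sign, and so do
their sines. For `x = π(ε + m)/Q` and `y = πε/Q` this holds because `|ε| < 1/2 < |ε + m|`,
`|2ε + m| < 1 + |m| ≤ Q` and `|m| < Q`.
-/

open Real

lemma Real.sin_sq_sub_sin_sq (x y : ℝ) : sin x ^ 2 - sin y ^ 2 = sin (x + y) * sin (x - y) := by
  rw [sin_add, sin_sub]
  linear_combination (sin_sq_add_cos_sq x) * sin y ^ 2 - (sin_sq_add_cos_sq y) * sin x ^ 2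

lemma Real.sin_mul_sin_pos {x y : ℝ} (hxy : 0 < x * y) (hx : |x| < π) (hy : |y| < π) :
    0 < sin x * sin y := by
  rw [abs_lt] at hx hy
  rcases lt_or_gt_of_ne (left_ne_zero_of_mul hxy.ne') with hx0 | hx0
  · have hy0 : y < 0 := neg_of_mul_pos_right hxy hx0.le
    exact mul_pos_of_neg_of_neg (sin_neg_of_neg_of_neg_pi_lt hx0 hx.1)
      (sin_neg_of_neg_of_neg_pi_lt hy0 hy.1)
  · have hy0 : 0 < y := pos_of_mul_pos_right hxy hx0.le
    exact mul_pos (sin_pos_of_pos_of_lt_pi hx0 hx.2) (sin_pos_of_pos_of_lt_pi hy0 hy.2)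

lemma Real.sin_sq_lt_sin_sq {x y : ℝ} (hyx : |y| < |x|) (hadd : |x + y| < π)
    (hsub : |x - y| < π) : sin y ^ 2 < sin x ^ 2 := by
  rw [← sub_pos, sin_sq_sub_sin_sq]
  refine sin_mul_sin_pos ?_ hadd hsub
  nlinarith [sq_lt_sq.mpr hyx]

lemma abs_pi_mul_div {Q : ℝ} (hQ : 0 < Q) (t : ℝ) : |π * t / Q| = π / Q * |t| := by
  rw [abs_div, abs_mul, abs_of_pos pi_pos, abs_of_pos hQ]
  ring

lemma abs_pi_mul_div_lt_pi {t Q : ℝ} (hQ : 0 < Q) (ht : |t| < Q) : |π * t / Q| < π := by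
  rw [abs_pi_mul_div hQ, div_mul_eq_mul_div, div_lt_iff₀ hQ]
  exact mul_lt_mul_of_pos_left ht pi_pos

theorem stmt18_general (Q : ℕ) (εf : ℝ) (hε0 : 0 < |εf|) (hε : |εf| < 1 / 2)
    (m : ℤ) (hm1 : 1 ≤ |m|) (hm2 : |m| ≤ (Q : ℤ) - 1) :
    Real.sin (Real.pi * (εf + (m : ℝ)) / Q) ^ 2 > Real.sin (Real.pi * εf / Q) ^ 2 ∧
    Real.sin (Real.pi * (εf + (m : ℝ)) / Q) ^ 2 / Real.sin (Real.pi * εf / Q) ^ 2 > 1 := by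
  have hm1' : (1 : ℝ) ≤ |(m : ℝ)| := by exact_mod_cast hm1
  have hm2' : |(m : ℝ)| ≤ Q - 1 := by exact_mod_cast hm2
  have hQ : (0 : ℝ) < Q := by linarith
  have hshift : |εf| < |εf + m| := by
    have := abs_sub (εf + m) εf
    rw [add_sub_cancel_left] at this
    linarith
  have hadd : |2 * εf + m| < Q := by
    have := abs_add_le (2 * εf) (m : ℝ)
    rw [abs_mul, abs_two] at this
    linarith
  have hlt : sin (π * εf / Q) ^ 2 < sin (π * (εf + m) / Q) ^ 2 := by
    refine sin_sq_lt_sin_sq ?_ ?_ ?_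
    · rw [abs_pi_mul_div hQ, abs_pi_mul_div hQ]
      gcongr
    · rw [show π * (εf + m) / Q + π * εf / Q = π * (2 * εf + m) / Q by ring]
      exact abs_pi_mul_div_lt_pi hQ hadd
    · rw [show π * (εf + m) / Q - π * εf / Q = π * m / Q by ring]
      exact abs_pi_mul_div_lt_pi hQ (by linarith)
  have hy : sin (π * εf / Q) ≠ 0 := by
    have hy_lt := abs_lt.mp (abs_pi_mul_div_lt_pi (t := εf) hQ (by linarith))
    rw [Ne, sin_eq_zero_iff_of_lt_of_lt hy_lt.1 hy_lt.2]
    exact div_ne_zero (mul_ne_zero pi_ne_zero (abs_pos.mp hε0)) hQ.ne'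
  exact ⟨hlt, (one_lt_div (sq_pos_of_ne_zero hy)).mpr hlt⟩

/-- For `0 < |ε_f| < 1/2` and an integer `m` with `1 ≤ |m| ≤ Q − 1`,
`sin²(π(ε_f+m)/Q) > sin²(πε_f/Q)`; equivalently the ratio exceeds `1`. -/
theorem stmt18 (Q : ℕ) (hQ : 2 ≤ Q) (εf : ℝ) (hε0 : 0 < |εf|) (hε : |εf| < 1 / 2)
    (m : ℤ) (hm1 : 1 ≤ |m|) (hm2 : |m| ≤ (Q : ℤ) - 1) :
    Real.sin (Real.pi * (εf + (m : ℝ)) / Q) ^ 2 > Real.sin (Real.pi * εf / Q) ^ 2 ∧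
    Real.sin (Real.pi * (εf + (m : ℝ)) / Q) ^ 2 / Real.sin (Real.pi * εf / Q) ^ 2 > 1 :=
  stmt18_general Q εf hε0 hε m hm1 hm2
end

section
/- Let P ≥ 2 be an even integer, let v, p_1, p_2 be integers, and let ϖ be a real number such that (ϖ − v(p_1 − p_2))/P is not an integer. Then the correlation of two shifted Chu-type exponential sequences satisfies Σ_{p=0}^{P−1} e^{iπv(p − p_1)²/P} · e^{−iπv(p − p_2)²/P} · e^{2πiϖp/P} = e^{iπv(p_1² − p_2²)/P} · (1 − e^{2πiϖ}) / (1 − e^{2πi(ϖ − v(p_1 − p_2))/P}). -/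
/-!
After multiplying out, the quadratic parts of the two chirps cancel:
`(p - p₁)² - (p - p₂)² = p₁² - p₂² - 2p(p₁ - p₂)`. Each summand is therefore the constant
`e^{iπv(p₁² - p₂²)/P}` times `r^p` with `r = e^{2πi(ϖ - v(p₁ - p₂))/P}`, and the sum is a geometric
series. The hypothesis on `ϖ` says exactly that `r ≠ 1`, and `r^P = e^{2πiϖ}` because
`v(p₁ - p₂)` is an integer.
-/

open Complex Real

lemma exp_two_pi_mul_I_ne_one_of_forall_ne_int {x : ℝ} (hx : ∀ z : ℤ, x ≠ z) :
    Complex.exp ((2 * π * x : ℝ) * I) ≠ 1 := by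
  rw [Ne, Complex.exp_eq_one_iff]
  rintro ⟨n, hn⟩
  have hsub : ((x : ℂ) - n) * (2 * π * I) = 0 := by
    push_cast at hn
    rw [sub_mul, ← hn]
    ring
  have hxn : (x : ℂ) - n = 0 := (mul_eq_zero.1 hsub).resolve_right two_pi_I_ne_zero
  exact hx n (by exact_mod_cast sub_eq_zero.1 hxn)

lemma exp_two_pi_mul_sub_int_div_mul_I_pow {P : ℕ} (hP : P ≠ 0) (x : ℝ) (n : ℤ) :
    Complex.exp ((2 * π * (x - n) / P : ℝ) * I) ^ P = Complex.exp ((2 * π * x : ℝ) * I) := by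
  have hexp : (P : ℂ) * ((2 * π * (x - n) / P : ℝ) * I)
      = (2 * π * x : ℝ) * I + (-n : ℤ) * (2 * π * I) := by
    push_cast
    field_simp
    ring
  rw [← Complex.exp_nat_mul, hexp, Complex.exp_add, exp_int_mul_two_pi_mul_I, mul_one]

lemma chirp_mul_conj_chirp_mul_exp_eq_mul_pow (P v p₁ p₂ ϖ : ℝ) (p : ℕ) :
    Complex.exp ((π * v * (p - p₁) ^ 2 / P : ℝ) * I) *
        Complex.exp ((-(π * v * (p - p₂) ^ 2 / P) : ℝ) * I) *
        Complex.exp ((2 * π * ϖ * p / P : ℝ) * I) =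
      Complex.exp ((π * v * (p₁ ^ 2 - p₂ ^ 2) / P : ℝ) * I) *
        Complex.exp ((2 * π * (ϖ - v * (p₁ - p₂)) / P : ℝ) * I) ^ p := by
  rw [← Complex.exp_nat_mul, ← Complex.exp_add, ← Complex.exp_add, ← Complex.exp_add]
  congr 1
  push_cast
  ring

theorem stmt19_general (P : ℕ) (v p₁ p₂ : ℤ) (ϖ : ℝ)
    (hϖ : ∀ z : ℤ, (ϖ - (v : ℝ) * ((p₁ : ℝ) - (p₂ : ℝ))) / (P : ℝ) ≠ (z : ℝ)) :
    ∑ p ∈ Finset.range P,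
        Complex.exp ((Real.pi * (v : ℝ) * ((p : ℝ) - (p₁ : ℝ)) ^ 2 / (P : ℝ) : ℝ) * Complex.I) *
          Complex.exp ((-(Real.pi * (v : ℝ) * ((p : ℝ) - (p₂ : ℝ)) ^ 2 / (P : ℝ)) : ℝ) * Complex.I) *
          Complex.exp ((2 * Real.pi * ϖ * (p : ℝ) / (P : ℝ) : ℝ) * Complex.I) =
      Complex.exp ((Real.pi * (v : ℝ) * ((p₁ : ℝ) ^ 2 - (p₂ : ℝ) ^ 2) / (P : ℝ) : ℝ) * Complex.I) *
        (1 - Complex.exp ((2 * Real.pi * ϖ : ℝ) * Complex.I)) /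
        (1 - Complex.exp ((2 * Real.pi * (ϖ - (v : ℝ) * ((p₁ : ℝ) - (p₂ : ℝ))) / (P : ℝ) : ℝ) * Complex.I)) := by
  -- at `P = 0` the quotient in `hϖ` is the junk value `0`, an integer
  have hP : P ≠ 0 := by
    rintro rfl
    exact hϖ 0 (by simp)
  have hr : Complex.exp ((2 * π * (ϖ - v * (p₁ - p₂)) / P : ℝ) * I) ≠ 1 := by
    simpa only [mul_div_assoc] using exp_two_pi_mul_I_ne_one_of_forall_ne_int hϖ
  have hrP := exp_two_pi_mul_sub_int_div_mul_I_pow hP ϖ (v * (p₁ - p₂))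
  rw [Int.cast_mul, Int.cast_sub] at hrP
  simp_rw [chirp_mul_conj_chirp_mul_exp_eq_mul_pow, ← Finset.mul_sum]
  rw [Finset.range_eq_Ico, geom_sum_Ico' hr (Nat.zero_le P), pow_zero, hrP, ← mul_div_assoc]

/-- Frequency-offset-modulated cross-correlation of two shifts of a length-`P` Chu
sequence: for even `P` and `(ϖ − v(p₁ − p₂))/P` not an integer,
`Σ_{p=0}^{P−1} e^{iπv(p−p₁)²/P} e^{−iπv(p−p₂)²/P} e^{2πiϖp/P}
  = e^{iπv(p₁²−p₂²)/P} (1 − e^{2πiϖ})/(1 − e^{2πi(ϖ−v(p₁−p₂))/P})`. -/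
theorem stmt19 (P : ℕ) (hP : 2 ≤ P) (hPeven : Even P) (v p₁ p₂ : ℤ) (ϖ : ℝ)
    (hϖ : ∀ z : ℤ, (ϖ - (v : ℝ) * ((p₁ : ℝ) - (p₂ : ℝ))) / (P : ℝ) ≠ (z : ℝ)) :
    ∑ p ∈ Finset.range P,
        Complex.exp ((Real.pi * (v : ℝ) * ((p : ℝ) - (p₁ : ℝ)) ^ 2 / (P : ℝ) : ℝ) * Complex.I) *
          Complex.exp ((-(Real.pi * (v : ℝ) * ((p : ℝ) - (p₂ : ℝ)) ^ 2 / (P : ℝ)) : ℝ) * Complex.I) *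
          Complex.exp ((2 * Real.pi * ϖ * (p : ℝ) / (P : ℝ) : ℝ) * Complex.I) =
      Complex.exp ((Real.pi * (v : ℝ) * ((p₁ : ℝ) ^ 2 - (p₂ : ℝ) ^ 2) / (P : ℝ) : ℝ) * Complex.I) *
        (1 - Complex.exp ((2 * Real.pi * ϖ : ℝ) * Complex.I)) /
        (1 - Complex.exp ((2 * Real.pi * (ϖ - (v : ℝ) * ((p₁ : ℝ) - (p₂ : ℝ))) / (P : ℝ) : ℝ) * Complex.I)) :=
  stmt19_general P v p₁ p₂ ϖ hϖ
end
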